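/- The function S(ω) = 8π·e^{5ω/2}·D(e^{2ω}), defined for all real ω, is even: S(−ω) = S(ω) for every ω ∈ ℝ. -/

import Mathlib

open Complex

/-- `D(x) = ∑_{n=1}^∞ n² (n²πx − 3/2) exp(−n²πx)`. -/
noncomputable def Dker (x : ℝ) : ℝ :=
  ∑' n : ℕ, ((n : ℝ) + 1) ^ 2 * (((n : ℝ) + 1) ^ 2 * Real.pi * x - 3 / 2) *
    Real.exp (-((n : ℝ) + 1) ^ 2 * Real.pi * x)

/-- `S(ω) = 8π e^{5ω/2} D(e^{2ω})`. -/
noncomputable def Sker (ω : ℝ) : ℝ :=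
  8 * Real.pi * Real.exp (5 * ω / 2) * Dker (Real.exp (2 * ω))

/-! With `θ = 2ψ + 1`, Jacobi's identity `θ(1/x) = √x θ(x)` says exactly that
`F(ω) = e^{ω/2} θ(e^{2ω})` is even. Differentiating twice in `ω` (termwise in `x = e^{2ω}`)
gives `S = F'' - F / 4`, and the second derivative of an even function is even. -/

open Real Set

section EvenOdd

variable {𝕜 F : Type*} [NontriviallyNormedField 𝕜] [NormedAddCommGroup F] [NormedSpace 𝕜 F]
  {f : 𝕜 → F}

theorem Function.Even.deriv (hf : f.Even) : (deriv f).Odd := fun x => by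
  have h := deriv_comp_neg f (-x)
  rwa [neg_neg, show (fun y => f (-y)) = f from funext hf] at h

theorem Function.Odd.deriv (hf : f.Odd) : (deriv f).Even := fun x => by
  have h := deriv_comp_neg f (-x)
  rwa [neg_neg, show (fun y => f (-y)) = -f from funext hf, deriv.neg, neg_inj] at h

end EvenOdd

noncomputable section

def psiTerm (k n : ℕ) (x : ℝ) : ℝ :=
  (-(π * ((n : ℝ) + 1) ^ 2)) ^ k * rexp (-(π * ((n : ℝ) + 1) ^ 2 * x))

/-- `psiDeriv k` is the `k`-th derivative of `ψ(x) = ∑_{n ≥ 1} e^{-πn²x}`. -/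
def psiDeriv (k : ℕ) (x : ℝ) : ℝ := ∑' n : ℕ, psiTerm k n x

lemma norm_psiTerm (k n : ℕ) (x : ℝ) :
    ‖psiTerm k n x‖ =
      (π * ((n : ℝ) + 1) ^ 2) ^ k * rexp (-(π * ((n : ℝ) + 1) ^ 2 * x)) := by
  rw [psiTerm, norm_mul, norm_pow, norm_neg, Real.norm_of_nonneg (by positivity),
    Real.norm_of_nonneg (exp_nonneg _)]

lemma summable_pow_mul_exp_neg_pi_mul_sq (k : ℕ) {x : ℝ} (hx : 0 < x) : Summable fun n : ℕ =>
    (π * ((n : ℝ) + 1) ^ 2) ^ k * rexp (-(π * ((n : ℝ) + 1) ^ 2 * x)) := by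
  have hgeom :
      Summable fun n : ℕ => ((n : ℝ) + 1) ^ (2 * k) * rexp (-(π * x * ((n : ℝ) + 1))) := by
    simpa using (summable_nat_add_iff 1).2 (summable_pow_mul_exp_neg_nat_mul (2 * k)
      (by positivity : 0 < π * x))
  refine (hgeom.mul_left (π ^ k)).of_nonneg_of_le (fun n => by positivity) fun n => ?_
  rw [mul_pow, ← pow_mul, mul_assoc]
  have hn : (n : ℝ) + 1 ≤ ((n : ℝ) + 1) ^ 2 := by nlinarith [n.cast_nonneg (α := ℝ)]
  refine mul_le_mul_of_nonneg_left (mul_le_mul_of_nonneg_left (exp_le_exp.2 ?_) (by positivity))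
    (by positivity)
  nlinarith [mul_le_mul_of_nonneg_left hn (mul_pos pi_pos hx).le]

lemma summable_psiTerm (k : ℕ) {x : ℝ} (hx : 0 < x) : Summable fun n => psiTerm k n x :=
  .of_norm <| by simpa only [norm_psiTerm] using summable_pow_mul_exp_neg_pi_mul_sq k hx

lemma hasDerivAt_psiTerm (k n : ℕ) (x : ℝ) :
    HasDerivAt (psiTerm k n) (psiTerm (k + 1) n x) x := by
  have hlin :
      HasDerivAt (fun y => -(π * ((n : ℝ) + 1) ^ 2 * y)) (-(π * ((n : ℝ) + 1) ^ 2)) x :=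
    ((hasDerivAt_id x).const_mul _).neg.congr_deriv (by simp)
  exact (hlin.exp.const_mul _).congr_deriv (by rw [psiTerm, pow_succ]; ring)

lemma hasDerivAt_psiDeriv (k : ℕ) {x : ℝ} (hx : 0 < x) :
    HasDerivAt (psiDeriv k) (psiDeriv (k + 1) x) x := by
  refine hasDerivAt_tsum_of_isPreconnected
    (summable_pow_mul_exp_neg_pi_mul_sq (k + 1) (half_pos hx)) isOpen_Ioi isPreconnected_Ioi
    (fun n y _ => hasDerivAt_psiTerm k n y) (fun n y hy => ?_) (half_lt_self hx)
    (summable_psiTerm k hx) (half_lt_self hx)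
  rw [norm_psiTerm]
  gcongr
  exact le_of_lt hy

lemma Dker_eq_psiDeriv {x : ℝ} (hx : 0 < x) :
    Dker x = (x * psiDeriv 2 x + 3 / 2 * psiDeriv 1 x) / π := by
  have hterm (n : ℕ) : ((n : ℝ) + 1) ^ 2 * (((n : ℝ) + 1) ^ 2 * π * x - 3 / 2) *
      rexp (-((n : ℝ) + 1) ^ 2 * π * x) = (x * psiTerm 2 n x + 3 / 2 * psiTerm 1 n x) / π := by
    rw [psiTerm, psiTerm,
      show -((n : ℝ) + 1) ^ 2 * π * x = -(π * ((n : ℝ) + 1) ^ 2 * x) by ring]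
    field_simp
    ring
  rw [Dker, tsum_congr hterm, tsum_div_const, Summable.tsum_add
    ((summable_psiTerm 2 hx).mul_left x) ((summable_psiTerm 1 hx).mul_left _), tsum_mul_left,
    tsum_mul_left, psiDeriv, psiDeriv]

lemma cosKernel_zero_eq_psiDeriv {x : ℝ} (hx : 0 < x) :
    HurwitzZeta.cosKernel 0 x = 2 * psiDeriv 0 x + 1 := by
  have h := HurwitzZeta.hasSum_nat_cosKernel₀ 0 hx
  simp only [mul_zero, zero_mul, Real.cos_zero, mul_one, QuotientAddGroup.mk_zero] at h
  have hψ :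
      HasSum (fun n : ℕ => 2 * rexp (-π * ((n : ℝ) + 1) ^ 2 * x)) (2 * psiDeriv 0 x) := by
    rw [psiDeriv]
    refine ((summable_psiTerm 0 hx).hasSum.mul_left 2).congr_fun fun n => ?_
    rw [psiTerm, pow_zero, one_mul, neg_mul, neg_mul]
  linarith [h.unique hψ]

lemma psiDeriv_zero_one_div {x : ℝ} (hx : 0 < x) :
    2 * psiDeriv 0 (1 / x) + 1 = √x * (2 * psiDeriv 0 x + 1) := by
  have h := HurwitzZeta.evenKernel_functional_equation 0 x
  rw [HurwitzZeta.evenKernel_eq_cosKernel_of_zero, cosKernel_zero_eq_psiDeriv hx,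
    cosKernel_zero_eq_psiDeriv (one_div_pos.2 hx), ← sqrt_eq_rpow] at h
  rw [h]
  field_simp [(sqrt_pos.2 hx).ne']

/-- `x ^ (1/4) * θ(x)` at `x = e^{2ω}`, where `θ = 2ψ + 1` is Jacobi's theta function. -/
def weightedTheta (ω : ℝ) : ℝ := rexp (ω / 2) * (2 * psiDeriv 0 (rexp (2 * ω)) + 1)

lemma weightedTheta_even : weightedTheta.Even := fun ω => by
  have hinv : rexp (2 * -ω) = 1 / rexp (2 * ω) := by rw [one_div, ← Real.exp_neg, mul_neg]
  have hsqrt : √(rexp (2 * ω)) = rexp ω := by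
    rw [two_mul, Real.exp_add, sqrt_mul_self (exp_pos ω).le]
  rw [weightedTheta, weightedTheta, hinv, psiDeriv_zero_one_div (exp_pos _), hsqrt, ← mul_assoc,
    ← Real.exp_add]
  congr 1
  ring_nf

lemma hasDerivAt_exp_const_mul (c ω : ℝ) :
    HasDerivAt (fun ω => rexp (c * ω)) (c * rexp (c * ω)) ω :=
  ((hasDerivAt_id ω).const_mul c).exp.congr_deriv (by simp [mul_comm])

lemma hasDerivAt_psiDeriv_exp (k : ℕ) (ω : ℝ) :
    HasDerivAt (fun ω => psiDeriv k (rexp (2 * ω)))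
      (2 * rexp (2 * ω) * psiDeriv (k + 1) (rexp (2 * ω))) ω := by
  have h := (hasDerivAt_psiDeriv k (exp_pos (2 * ω))).comp ω (hasDerivAt_exp_const_mul 2 ω)
  exact h.congr_deriv (mul_comm _ _)

lemma hasDerivAt_exp_half (ω : ℝ) :
    HasDerivAt (fun ω => rexp (ω / 2)) (1 / 2 * rexp (ω / 2)) ω :=
  ((hasDerivAt_id ω).div_const 2).exp.congr_deriv (by simp [mul_comm])

lemma deriv_weightedTheta : deriv weightedTheta = fun ω => rexp (ω / 2) *
    ((2 * psiDeriv 0 (rexp (2 * ω)) + 1) / 2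
      + 4 * rexp (2 * ω) * psiDeriv 1 (rexp (2 * ω))) := by
  funext ω
  have hθ := ((hasDerivAt_psiDeriv_exp 0 ω).const_mul 2).add_const 1
  exact ((hasDerivAt_exp_half ω).mul hθ).deriv.trans (by ring)

lemma deriv_deriv_weightedTheta (ω : ℝ) : deriv (deriv weightedTheta) ω = rexp (ω / 2) *
    ((2 * psiDeriv 0 (rexp (2 * ω)) + 1) / 4 + 12 * rexp (2 * ω) * psiDeriv 1 (rexp (2 * ω))
      + 8 * rexp (2 * ω) ^ 2 * psiDeriv 2 (rexp (2 * ω))) := by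
  rw [deriv_weightedTheta]
  have hθ := ((hasDerivAt_psiDeriv_exp 0 ω).const_mul 2).add_const 1
  have hψ := ((hasDerivAt_exp_const_mul 2 ω).const_mul 4).mul (hasDerivAt_psiDeriv_exp 1 ω)
  exact ((hasDerivAt_exp_half ω).mul ((hθ.div_const 2).add hψ)).deriv.trans
    (by simp only [Pi.add_apply, Pi.mul_apply]; ring)

lemma Sker_eq (ω : ℝ) : Sker ω = deriv (deriv weightedTheta) ω - weightedTheta ω / 4 := by
  rw [Sker, Dker_eq_psiDeriv (exp_pos _), deriv_deriv_weightedTheta, weightedTheta,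
    show rexp (5 * ω / 2) = rexp (ω / 2) * rexp (2 * ω) by rw [← Real.exp_add]; ring_nf]
  field_simp
  ring

end

/-- The function `S(ω) = 8π e^{5ω/2} D(e^{2ω})` is even:
`S(−ω) = S(ω)` for every real `ω`. -/
theorem stmt_15 : ∀ ω : ℝ, Sker (-ω) = Sker ω := fun ω => by
  rw [Sker_eq, Sker_eq, weightedTheta_even.deriv.deriv ω, weightedTheta_even ω]
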